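/- arXiv:2101.06885 — 4 statements merged into one kernel-verified Lean document; each statement's English description precedes it below -/
import Mathlib

section
/- For any q ≤ 1/3, p ≤ 1/2, and γ ∈ [0,1], r_A(γ) = q/(1-γp) ≤ r_B(γ) = q(2-3γp)/(1-γp)², with equality only if γ = 1 and p = 1/2. -/
noncomputable def rA (q p γ : ℝ) : ℝ := q / (1 - γ * p)

noncomputable def rB (q p γ : ℝ) : ℝ := q * (2 - 3 * γ * p) / (1 - γ * p) ^ 2

/-- `rA(γ) ≤ rB(γ)`, with equality only if `γ = 1` and `p = 1/2`. -/
theorem stmt_2 (q p γ : ℝ) (hq0 : 0 < q) (hq : q ≤ 1 / 3) (hp0 : 0 < p)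
    (hp : p ≤ 1 / 2) (hγ : γ ∈ Set.Icc (0 : ℝ) 1) :
    rA q p γ ≤ rB q p γ ∧ (rA q p γ = rB q p γ → γ = 1 ∧ p = 1 / 2) := by
  obtain ⟨hγ0, hγ1⟩ := hγ
  have ht : γ * p ≤ 1 / 2 := by nlinarith
  have ht0 : 0 ≤ γ * p := by positivity
  have hne : (0:ℝ) < 1 - γ * p := by linarith
  have hdiff : rB q p γ - rA q p γ = q * (1 - 2 * (γ * p)) / (1 - γ * p) ^ 2 := by
    unfold rA rB
    field_simp
    ring
  constructor
  · have : 0 ≤ q * (1 - 2 * (γ * p)) / (1 - γ * p) ^ 2 := by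
      apply div_nonneg
      · nlinarith
      · positivity
    linarith [hdiff]
  · intro heq
    have h0 : q * (1 - 2 * (γ * p)) / (1 - γ * p) ^ 2 = 0 := by
      rw [← hdiff, heq]; ring
    have h1 : q * (1 - 2 * (γ * p)) = 0 := by
      have hne2 : (1 - γ * p) ^ 2 ≠ 0 := by positivity
      field_simp [hne2] at h0
      nlinarith [h0]
    have h2 : γ * p = 1 / 2 := by
      rcases mul_eq_zero.mp h1 with h | h
      · linarith
      · linarith
    constructor
    · nlinarith
    · nlinarith
end

section
/- Let u(0,γ) = r_A(γ) + (r_B(γ) - r_A(γ))/2 (uninformed expected utility) and u(1,γ) = u(0,γ) + p·G·r_B(γ) (informed expected utility gross of cost), where r_A(γ) = q/(1-γp), r_B(γ) = q(2-3γp)/(1-γp)², G > 0, p ≤ 1/2, q ≤ 1/3. Then u(1,γ') - u(0,γ') ≥ u(1,γ) - u(0,γ) whenever γ ≤ γ' and γ'p ≤ 1/3, i.e., the gain from learning p·G·r_B(γ) is nondecreasing in γ on [0, 1/(3p)]. -/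
/-- Expected utility of an uninformed applicant. -/
noncomputable def u0 (q p γ : ℝ) : ℝ := rA q p γ + (rB q p γ - rA q p γ) / 2

/-- Expected utility (gross of cost) of an informed applicant. -/
noncomputable def u1 (q p G γ : ℝ) : ℝ := u0 q p γ + p * G * rB q p γ

/-- the gain from learning `p·G·rB(γ)` is nondecreasing in `γ` on `[0, 1/(3p)]`. -/
theorem stmt_4 (q p G γ γ' : ℝ) (hq0 : 0 < q) (hq : q ≤ 1 / 3) (hp0 : 0 < p)
    (hp : p ≤ 1 / 2) (hG : 0 < G) (hγ0 : 0 ≤ γ) (hle : γ ≤ γ') (hγ' : γ' * p ≤ 1 / 3) :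
    u1 q p G γ - u0 q p γ ≤ u1 q p G γ' - u0 q p γ' := by
  have e1 : u1 q p G γ - u0 q p γ = p * G * rB q p γ := by simp [u1]
  have e2 : u1 q p G γ' - u0 q p γ' = p * G * rB q p γ' := by simp [u1]
  rw [e1, e2]
  have hx0 : 0 ≤ γ * p := mul_nonneg hγ0 hp0.le
  have hxy : γ * p ≤ γ' * p := mul_le_mul_of_nonneg_right hle hp0.le
  set x := γ * p with hxdef
  set y := γ' * p with hydef
  have hy3 : y ≤ 1 / 3 := hγ'
  have hx3 : x ≤ 1 / 3 := le_trans hxy hy3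
  have hdx : (0:ℝ) < 1 - x := by linarith
  have hdy : (0:ℝ) < 1 - y := by linarith
  have hden : (0:ℝ) < (1 - x) ^ 2 := by positivity
  have hden' : (0:ℝ) < (1 - y) ^ 2 := by positivity
  have key : (2 - 3 * x) / (1 - x) ^ 2 ≤ (2 - 3 * y) / (1 - y) ^ 2 := by
    rw [div_le_div_iff₀ hden hden']
    nlinarith [mul_nonneg (sub_nonneg.mpr hxy) (by linarith : (0:ℝ) ≤ 1/3 - x),
      mul_nonneg (sub_nonneg.mpr hxy)
        (mul_nonneg (by linarith : (0:ℝ) ≤ 1 - 3*y) (by linarith : (0:ℝ) ≤ 2/3 - x))]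
  have h1 : rB q p γ ≤ rB q p γ' := by
    simp only [rB, mul_div_assoc]
    rw [show (3:ℝ) * γ * p = 3 * x by rw [hxdef]; ring,
        show (3:ℝ) * γ' * p = 3 * y by rw [hydef]; ring, ← hxdef, ← hydef]
    exact mul_le_mul_of_nonneg_left key hq0.le
  have h2 : 0 ≤ p * G := by positivity
  exact mul_le_mul_of_nonneg_left h1 h2
end

section
/- Let γ_L < γ_H both satisfy the equilibrium condition ΔU(γ) = c(γ) with ΔU(γ) = p·G·r_B(γ), r_B(γ) = q(2-3γp)/(1-γp)², and suppose γ_H·p ≤ 1/3. Then: (i) informed applicants i ≤ γ_L and uninformed applicants i > γ_H have weakly higher expected utility under γ_H than γ_L; (ii) every applicant i ∈ (γ_L, γ_H] satisfies U(1|γ_H) - c(i) ≥ U(0|γ_H) > U(0|γ_L), so the γ_H equilibrium Pareto dominates the γ_L equilibrium. -/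
open Set

/-- Expected utility of an uninformed applicant. -/
noncomputable def U0 (q p γ : ℝ) : ℝ := rA q p γ + (rB q p γ - rA q p γ) / 2

/-- Expected utility (gross of cost) of an informed applicant. -/
noncomputable def U1 (q p G γ : ℝ) : ℝ := U0 q p γ + p * G * rB q p γ

lemma U0_eq (q p γ : ℝ) (h : 1 - γ * p ≠ 0) :
    U0 q p γ = q * (3 - 4 * (γ * p)) / (2 * (1 - γ * p) ^ 2) := by
  unfold U0 rA rB
  field_simp
  ring

lemma U0_mono (q a b : ℝ) (hq : 0 < q) (ha : 0 ≤ a) (hab : a < b) (hb : b ≤ 1 / 3) :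
    q * (3 - 4 * a) / (2 * (1 - a) ^ 2) < q * (3 - 4 * b) / (2 * (1 - b) ^ 2) := by
  have h1 : (0:ℝ) < 1 - a := by linarith
  have h2 : (0:ℝ) < 1 - b := by linarith
  rw [div_lt_div_iff₀ (by positivity) (by positivity)]
  have hpos : (0:ℝ) < 2 - 3 * (a + b) + 4 * a * b := by
    nlinarith [mul_nonneg (by linarith : (0:ℝ) ≤ 1/3 - a) (by linarith : (0:ℝ) ≤ 1/3 - b)]
  nlinarith [mul_pos hq (mul_pos (sub_pos.2 hab) hpos)]

lemma rB_mono' (q a b : ℝ) (hq : 0 < q) (ha : 0 ≤ a) (hab : a < b) (hb : b ≤ 1 / 3) :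
    q * (2 - 3 * a) / (1 - a) ^ 2 ≤ q * (2 - 3 * b) / (1 - b) ^ 2 := by
  have h1 : (0:ℝ) < 1 - a := by linarith
  have h2 : (0:ℝ) < 1 - b := by linarith
  rw [div_le_div_iff₀ (by positivity) (by positivity)]
  have hpos : (0:ℝ) ≤ 1 - 2 * (a + b) + 3 * a * b := by
    nlinarith [mul_nonneg (by linarith : (0:ℝ) ≤ 1/3 - a) (by linarith : (0:ℝ) ≤ 1/3 - b)]
  nlinarith [mul_nonneg (mul_nonneg hq.le (sub_pos.2 hab).le) hpos]

lemma rB_eq (q p γ : ℝ) : rB q p γ = q * (2 - 3 * (γ * p)) / (1 - γ * p) ^ 2 := by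
  unfold rB; ring_nf

lemma rB_mono (q p γL γH : ℝ) (hq : 0 < q) (hp : 0 < p) (hγL : 0 ≤ γL)
    (hab : γL < γH) (hb : γH * p ≤ 1 / 3) :
    rB q p γL ≤ rB q p γH := by
  rw [rB_eq, rB_eq]
  exact rB_mono' q _ _ hq (mul_nonneg hγL hp.le) (mul_lt_mul_of_pos_right hab hp) hb

/-- the high-information equilibrium `γ_H` Pareto dominates the
low-information equilibrium `γ_L` when `γ_H p ≤ 1/3`. -/
theorem stmt_10 (q p G : ℝ) (c : ℝ → ℝ) (γL γH : ℝ)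
    (hq0 : 0 < q) (hq : q ≤ 1 / 3) (hp0 : 0 < p) (hp : p ≤ 1 / 2) (hG : 0 < G)
    (hc : StrictMonoOn c (Icc 0 1))
    (hγL : γL ∈ Icc (0 : ℝ) 1) (hγH : γH ∈ Icc (0 : ℝ) 1) (hLH : γL < γH)
    (heqL : p * G * rB q p γL = c γL) (heqH : p * G * rB q p γH = c γH)
    (hH : γH * p ≤ 1 / 3) :
    (U1 q p G γL ≤ U1 q p G γH ∧ U0 q p γL ≤ U0 q p γH) ∧
    ∀ i ∈ Ioc γL γH, U0 q p γH ≤ U1 q p G γH - c i ∧ U0 q p γL < U0 q p γH := by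
  have ha : 0 ≤ γL * p := mul_nonneg hγL.1 hp0.le
  have hab : γL * p < γH * p := mul_lt_mul_of_pos_right hLH hp0
  have h1 : (1 : ℝ) - γL * p ≠ 0 := by nlinarith
  have h2 : (1 : ℝ) - γH * p ≠ 0 := by nlinarith
  have hU0 : U0 q p γL < U0 q p γH := by
    rw [U0_eq q p γL h1, U0_eq q p γH h2]
    exact U0_mono q _ _ hq0 ha hab hH
  have hrB : rB q p γL ≤ rB q p γH := rB_mono q p γL γH hq0 hp0 hγL.1 hLH hH
  have hU1 : U1 q p G γL ≤ U1 q p G γH := by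
    unfold U1
    have := mul_le_mul_of_nonneg_left hrB (by positivity : (0:ℝ) ≤ p * G)
    linarith
  refine ⟨⟨hU1, hU0.le⟩, fun i hi => ?_⟩
  have hiI : i ∈ Icc (0:ℝ) 1 := ⟨le_trans hγL.1 hi.1.le, le_trans hi.2 hγH.2⟩
  have hci : c i ≤ c γH := hc.monotoneOn hiI hγH hi.2
  refine ⟨?_, hU0⟩
  unfold U1
  linarith
end

section
/- When priorities are revealed ex-ante, the equilibrium fraction γ* of informed applicants among those for whom A or B is feasible solves pG = c(γ*), while the equilibrium with hidden priorities solves pG·r_B(γ^Eq) = c(γ^Eq). Since r_B(γ) < 1 for all γ and c is strictly increasing, it follows that γ* > γ^Eq, and consequently r_A(γ*) > r_A(γ^Eq) and r_B(γ*) > r_B(γ^Eq) provided γ*p ≤ 1/3. -/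
open Set

/-- the equilibrium with revealed priorities, `γ*` solving `pG = c(γ*)`,
has strictly more learning than the hidden-priority equilibrium `γ^Eq` solving
`pG·rB(γ^Eq) = c(γ^Eq)`, and both cutoffs are strictly higher. -/
theorem stmt_13 (q p G : ℝ) (c : ℝ → ℝ) (γstar γEq : ℝ)
    (hq0 : 0 < q) (hq : q ≤ 1 / 3) (hp0 : 0 < p) (hp : p ≤ 1 / 2) (hG : 0 < G)
    (hc_cont : ContinuousOn c (Icc 0 1)) (hc_mono : StrictMonoOn c (Icc 0 1))
    (hrB1 : ∀ γ ∈ Icc (0 : ℝ) 1, rB q p γ < 1)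
    (hγstar : γstar ∈ Ioo (0 : ℝ) 1) (hγEq : γEq ∈ Ioo (0 : ℝ) 1)
    (heqstar : p * G = c γstar) (heqEq : p * G * rB q p γEq = c γEq)
    (hcond : γstar * p ≤ 1 / 3) :
    γEq < γstar ∧ rA q p γEq < rA q p γstar ∧ rB q p γEq < rB q p γstar := by
  obtain ⟨hs0, hs1⟩ := hγstar
  obtain ⟨he0, he1⟩ := hγEq
  have memS : γstar ∈ Icc (0 : ℝ) 1 := ⟨le_of_lt hs0, le_of_lt hs1⟩
  have memE : γEq ∈ Icc (0 : ℝ) 1 := ⟨le_of_lt he0, le_of_lt he1⟩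
  have hpG : 0 < p * G := mul_pos hp0 hG
  have hclt : c γEq < c γstar := by
    rw [← heqstar, ← heqEq]
    have := hrB1 γEq memE
    nlinarith
  have hlt : γEq < γstar := by
    by_contra h
    push_neg at h
    rcases eq_or_lt_of_le h with h | h
    · rw [h] at hclt; exact lt_irrefl _ hclt
    · exact absurd (hc_mono memS memE h) (not_lt.mpr hclt.le)
  -- denominators
  set a := γEq * p with ha
  set b := γstar * p with hb
  have hab : a < b := by
    apply mul_lt_mul_of_pos_right hlt hp0
  have ha0 : 0 < a := mul_pos he0 hp0
  have hb3 : b ≤ 1 / 3 := hcond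
  have hbpos : 0 < 1 - b := by linarith
  have hapos : 0 < 1 - a := by linarith
  refine ⟨hlt, ?_, ?_⟩
  · unfold rA
    rw [div_lt_div_iff₀ hapos hbpos]
    nlinarith
  · unfold rB
    rw [div_lt_div_iff₀ (by positivity) (by positivity)]
    have hg : 0 < 1 - 2 * a - 2 * b + 3 * a * b := by
      nlinarith [mul_nonneg hbpos.le (by linarith : (0:ℝ) ≤ 1 - 3 * b),
        mul_pos (sub_pos.mpr hab) (by linarith : (0:ℝ) < 2 - 3 * b)]
    have key : 0 < q * ((b - a) * (1 - 2 * a - 2 * b + 3 * a * b)) :=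
      mul_pos hq0 (mul_pos (sub_pos.mpr hab) hg)
    rw [ha, hb] at key
    nlinarith [key]
end
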